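/- Let P be a partition of a positive integer n, let b_1 < b_2 < … < b_r be positive integers with b_{i+1} ≥ b_i + 2 for 1 ≤ i < r, let u ∈ {1, …, r}, and let a be a positive integer with b_u + 1 < a; if u < r assume moreover a < b_{u+1} − 1. Assume that s(P,a) ≥ s(P,c) for every integer c with b_u ≤ c ≤ a − 1. Then the sequence b_1, …, b_{u−1}, a, b_{u+1}, …, b_r defines an r-U-chain in D_P and |U_{b_1,…,b_{u−1},a,b_{u+1},…,b_r}| ≥ |U_{b_1,…,b_r}|. -/

import Mathlib

/-!
Common definitions for the poset `D_P` attached to a partition `P` of `n`,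
its `U`-chains, the quantity `s(P,a)` (cardinality of a simple `U`-chain),
and `U`-processes, following Khatami, "The poset of the nilpotent commutator
of a nilpotent matrix".

A partition of `n` is encoded by its multiplicity function `np : ℕ →₀ ℕ`
(`np p` = number of parts equal to `p`), with `np 0 = 0` and `Σ p·np p = n`.
-/

/-- Vertices are triples `(u, p, k)`. -/
abbrev Vtx : Type := ℕ × ℕ × ℕ

/-- `np` is the multiplicity function of a partition of `n`. -/
def IsPartitionOf (n : ℕ) (np : ℕ →₀ ℕ) : Prop :=
  np 0 = 0 ∧ (np.sum fun p m => p * m) = n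

/-- The vertex set of the diagram `D_P`: triples `(u,p,k)` with
`1 ≤ u ≤ p` and `1 ≤ k ≤ np p`. -/
def vertexSet (np : ℕ →₀ ℕ) : Set Vtx :=
  {v | 1 ≤ v.1 ∧ v.1 ≤ v.2.1 ∧ 1 ≤ v.2.2 ∧ v.2.2 ≤ np v.2.1}

/-- The set `S_i` for the value `a`:
`S_i = {(u,p,k) : p ∈ {a, a+1}, i ≤ u ≤ p−i+1} ∪ {(u,p,k) : p > a+1, u ∈ {i, p−i+1}}`,
a subset of the vertex set of `D_P`.  (The condition `u ≤ p - i + 1` is written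
as `u + i ≤ p + 1` to avoid truncated subtraction.) -/
def Sset (np : ℕ →₀ ℕ) (i a : ℕ) : Set Vtx :=
  {v ∈ vertexSet np |
    ((v.2.1 = a ∨ v.2.1 = a + 1) ∧ i ≤ v.1 ∧ v.1 + i ≤ v.2.1 + 1) ∨
    (a + 1 < v.2.1 ∧ (v.1 = i ∨ v.1 + i = v.2.1 + 1))}

/-- The `r`-`U`-chain `U_{b 1, …, b r} = S_1 ∪ ⋯ ∪ S_r` in `D_P`. -/
def UChain (np : ℕ →₀ ℕ) (b : ℕ → ℕ) (r : ℕ) : Set Vtx :=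
  ⋃ i ∈ Set.Icc 1 r, Sset np i (b i)

/-- `b 1 < b 2 < ⋯ < b r` are positive with consecutive differences at least `2`. -/
def ValidSeq (b : ℕ → ℕ) (r : ℕ) : Prop :=
  (∀ i, 1 ≤ i → i ≤ r → 1 ≤ b i) ∧ ∀ i, 1 ≤ i → i < r → b i + 2 ≤ b (i + 1)

/-- `s(P,a) = a·n_a + (a+1)·n_{a+1} + 2·Σ_{p>a+1} n_p`, the cardinality of the
simple `U`-chain `U_a` in `D_P`. -/
def sVal (np : ℕ →₀ ℕ) (a : ℕ) : ℕ :=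
  a * np a + (a + 1) * np (a + 1) +
    2 * ∑ p ∈ np.support.filter (fun p => a + 1 < p), np p

/-- `a` is optimal for `P`: `U_a` is a maximum simple `U`-chain in `D_P`. -/
def OptimalFor (np : ℕ →₀ ℕ) (a : ℕ) : Prop :=
  1 ≤ a ∧ ∀ c, 1 ≤ c → sVal np c ≤ sVal np a

/-- `p` is a part of the partition with multiplicity function `np`. -/
def IsPart (np : ℕ →₀ ℕ) (p : ℕ) : Prop := 0 < p ∧ 0 < np p

/-- The covering relation of the poset `D_P`:  `Cov np x y` means `y` covers `x`.
(i)  for consecutive parts `q < p` and `1 ≤ u ≤ q`, `(u, p, np p)` is covered by `(u, q, 1)`;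
(ii) for consecutive parts `p < q` and `1 ≤ u ≤ p`, `(u, p, np p)` is covered by
     `(u + q − p, q, 1)`;
(iii) for a part `p`, `1 ≤ u ≤ p`, `1 ≤ k < np p`, `(u,p,k)` is covered by `(u,p,k+1)`;
(iv) for an isolated part `p` (neither `p−1` nor `p+1` is a part) and `1 ≤ u < p`,
     `(u, p, np p)` is covered by `(u+1, p, 1)`. -/
def Cov (np : ℕ →₀ ℕ) (x y : Vtx) : Prop :=
  (∃ p q u, IsPart np p ∧ IsPart np q ∧ q < p ∧
      (∀ t, q < t → t < p → ¬ IsPart np t) ∧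
      1 ≤ u ∧ u ≤ q ∧ x = (u, p, np p) ∧ y = (u, q, 1)) ∨
  (∃ p q u, IsPart np p ∧ IsPart np q ∧ p < q ∧
      (∀ t, p < t → t < q → ¬ IsPart np t) ∧
      1 ≤ u ∧ u ≤ p ∧ x = (u, p, np p) ∧ y = (u + (q - p), q, 1)) ∨
  (∃ p u k, IsPart np p ∧ 1 ≤ u ∧ u ≤ p ∧ 1 ≤ k ∧ k < np p ∧
      x = (u, p, k) ∧ y = (u, p, k + 1)) ∨
  (∃ p u, IsPart np p ∧ ¬ IsPart np (p - 1) ∧ ¬ IsPart np (p + 1) ∧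
      1 ≤ u ∧ u < p ∧ x = (u, p, np p) ∧ y = (u + 1, p, 1))

/-- The partial order of `D_P`: reflexive–transitive closure of the covering relation. -/
def leD (np : ℕ →₀ ℕ) : Vtx → Vtx → Prop := Relation.ReflTransGen (Cov np)

/-- A chain in `D_P`: a subset of the vertex set that is totally ordered by `leD`. -/
def IsChainD (np : ℕ →₀ ℕ) (C : Set Vtx) : Prop :=
  C ⊆ vertexSet np ∧ ∀ x ∈ C, ∀ y ∈ C, leD np x y ∨ leD np y x

/-- `u_r(P)`: the maximum cardinality of an `r`-`U`-chain in `D_P`. -/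
noncomputable def uMax (np : ℕ →₀ ℕ) (r : ℕ) : ℕ :=
  sSup {m | ∃ b : ℕ → ℕ, ValidSeq b r ∧ (UChain np b r).ncard = m}

/-- The relabeling injection `ι : D_{P'} → D_P` attached to removing `U_a`. -/
def iotaMap (a : ℕ) (v : Vtx) : Vtx :=
  if v.2.1 < a then v else (v.1 + 1, v.2.1 + 2, v.2.2)

/-- `iotaComp aa i = ι_1 ∘ ⋯ ∘ ι_i`, where `ι_j` is the relabeling map for `aa j`. -/
def iotaComp (aa : ℕ → ℕ) : ℕ → Vtx → Vtx
  | 0 => id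
  | i + 1 => iotaComp aa i ∘ iotaMap (aa (i + 1))

/-- `(P_1, …, P_{r+1}; a_1, …, a_r)` is a `U`-process of length `r` for `P`:
`P_1 = P`, each `a_i` is optimal for `P_i`, and `P_{i+1}` is obtained from `P_i`
by deleting the parts equal to `a_i` or `a_i + 1` and decreasing by `2` every
part greater than `a_i + 1`. -/
def IsUProcess (r : ℕ) (np : ℕ →₀ ℕ) (Ps : ℕ → ℕ →₀ ℕ) (aa : ℕ → ℕ) : Prop :=
  Ps 1 = np ∧
    ∀ i, 1 ≤ i → i ≤ r →
      OptimalFor (Ps i) (aa i) ∧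
        ∀ m, Ps (i + 1) m = if m < aa i then Ps i m else Ps i (m + 2)

/-- The subset `C_i = (ι_1 ∘ ⋯ ∘ ι_{i−1})(U_{a_i}) ⊆ D_P` of a `U`-process. -/
def Cset (Ps : ℕ → ℕ →₀ ℕ) (aa : ℕ → ℕ) (i : ℕ) : Set Vtx :=
  iotaComp aa (i - 1) '' Sset (Ps i) 1 (aa i)


/-!
Only the `u`-th piece of the chain moves, and `S_u` is disjoint from the other pieces both
before and after the move, so it suffices to show `|S_u(b_u)| ≤ |S_u(a)|`. Counting rows,
`|S_u(c)| = s(P,c) - (2u-2)(n_c + n_{c+1})`, and with `d_c = n_{c+2} - n_c` one finds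
`s(P,c+1) - s(P,c) = c·d_c` and `|S_u(c+1)| - |S_u(c)| = (c-2u+2)·d_c`. Hence the increments of
`|S_u|` are those of `s(P,·)` scaled by the nonnegative, increasing weights `1 - (2u-2)/c`, and
Abel summation turns `s(P,c) ≤ s(P,a)` on `[b_u, a)` into `|S_u(b_u)| ≤ |S_u(a)|`.
-/

open Finset

lemma Finsupp.sum_support_ite_eq_mul {α M : Type*} [DecidableEq α] [Semiring M] (f : α →₀ M)
    (q : α) (x : M) : ∑ p ∈ f.support, (if p = q then x else 0) * f p = x * f q := by
  simp +contextual

section Counting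

variable (np : ℕ →₀ ℕ)

lemma finite_vertexSet : (vertexSet np).Finite := by
  refine (np.support.biUnion fun p => Icc 1 p ×ˢ ({p} ×ˢ Icc 1 (np p))).finite_toSet.subset ?_
  rintro ⟨w, p, k⟩ ⟨hw1, hwp : w ≤ p, hk1 : 1 ≤ k, hkp : k ≤ np p⟩
  simp only [coe_biUnion, mem_coe, Finsupp.mem_support_iff, Set.mem_iUnion,
    mem_product, mem_Icc, mem_singleton]
  exact ⟨p, by omega, ⟨hw1, hwp⟩, rfl, hk1, hkp⟩

lemma finite_Sset (i c : ℕ) : (Sset np i c).Finite :=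
  (finite_vertexSet np).subset (Set.sep_subset _ _)

def SsetRow (i c p : ℕ) : Finset ℕ :=
  if p < c then ∅ else if p ≤ c + 1 then Icc i (p + 1 - i) else {i, p + 1 - i}

variable {np} {i c : ℕ}

lemma Sset_eq_biUnion (hi : 1 ≤ i) (hic : 2 * i ≤ c + 1) :
    Sset np i c = ↑(np.support.biUnion fun p => SsetRow i c p ×ˢ ({p} ×ˢ Icc 1 (np p))) := by
  ext ⟨w, p, k⟩
  simp only [Sset, vertexSet, SsetRow, Set.mem_ofPred_eq, coe_biUnion,
    Finsupp.mem_support_iff, Set.mem_iUnion, mem_coe, mem_product, mem_Icc, mem_singleton]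
  constructor
  · rintro ⟨⟨hw1, hwp, hk1, hkp⟩, hrow⟩
    refine ⟨p, by omega, ?_, rfl, hk1, hkp⟩
    split_ifs <;> simp only [mem_Icc, mem_insert, mem_singleton, Finset.notMem_empty] <;> omega
  · rintro ⟨q, hq, hw, rfl, hk1, hkp⟩
    split_ifs at hw <;> simp only [mem_Icc, mem_insert, mem_singleton, Finset.notMem_empty] at hw
      <;> omega

lemma card_SsetRow (hic : 2 * i ≤ c + 1) (p : ℕ) :
    #(SsetRow i c p) = (if p = c then c + 2 - 2 * i else 0) +
      (if p = c + 1 then c + 3 - 2 * i else 0) + (if c + 1 < p then 2 else 0) := by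
  unfold SsetRow
  split_ifs
  all_goals first
    | omega
    | rfl
    | (rw [Nat.card_Icc]; omega)
    | rw [card_pair (by omega)]

lemma ncard_Sset (hi : 1 ≤ i) (hic : 2 * i ≤ c + 1) :
    (Sset np i c).ncard = (c + 2 - 2 * i) * np c + (c + 3 - 2 * i) * np (c + 1) +
      2 * ∑ p ∈ np.support with c + 1 < p, np p := by
  rw [Sset_eq_biUnion hi hic, Set.ncard_coe_finset, card_biUnion]
  · simp only [card_product, card_singleton, Nat.card_Icc, add_tsub_cancel_right, one_mul,
      card_SsetRow hic, add_mul, sum_add_distrib, Finsupp.sum_support_ite_eq_mul]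
    rw [mul_sum, sum_filter]
    simp only [ite_mul, zero_mul]
  · intro p _ q _ hpq
    simp only [Function.onFun, disjoint_left, mem_product, mem_singleton]
    rintro ⟨w, p', k⟩ ⟨-, rfl, -⟩ ⟨-, rfl, -⟩
    exact hpq rfl

lemma ncard_Sset_add (hi : 1 ≤ i) (hic : 2 * i ≤ c + 1) :
    (Sset np i c).ncard + (2 * i - 2) * (np c + np (c + 1)) = sVal np c := by
  have hc : c + 2 - 2 * i + (2 * i - 2) = c := by omega
  have hc' : c + 3 - 2 * i + (2 * i - 2) = c + 1 := by omega
  rw [ncard_Sset hi hic, sVal]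
  calc _ = (c + 2 - 2 * i + (2 * i - 2)) * np c + (c + 3 - 2 * i + (2 * i - 2)) * np (c + 1) +
        2 * ∑ p ∈ np.support with c + 1 < p, np p := by ring
    _ = _ := by rw [hc, hc']

lemma sum_filter_lt_eq_add (q : ℕ) :
    ∑ p ∈ np.support with q < p, np p = np (q + 1) + ∑ p ∈ np.support with q + 1 < p, np p := by
  simp only [sum_filter]
  rw [← Finsupp.sum_ite_self_eq' np (q + 1), Finsupp.sum, ← sum_add_distrib]
  refine sum_congr rfl fun p _ => ?_
  split_ifs <;> omega

lemma sVal_succ_add (c : ℕ) : sVal np (c + 1) + c * np c = sVal np c + c * np (c + 2) := by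
  rw [sVal, sVal, sum_filter_lt_eq_add (c + 1)]
  ring

end Counting

section WeightedIncrements

variable {R : Type*} [Ring R] [PartialOrder R] [IsOrderedRing R] {F G w : ℕ → R} {b a : ℕ}

lemma mul_sub_le_sub_of_weighted_increments (hw : ∀ c, b ≤ c → c < a → w c ≤ w (c + 1))
    (hG : ∀ c, b ≤ c → c < a → G (c + 1) - G c = w c * (F (c + 1) - F c))
    (hF : ∀ c, b ≤ c → c < a → F c ≤ F a) {c : ℕ} (hbc : b ≤ c) (hca : c ≤ a) :
    w c * (F a - F c) ≤ G a - G c := by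
  refine Nat.decreasingInduction' (P := fun c => w c * (F a - F c) ≤ G a - G c)
    (fun k hka hck ih => ?_) hca (by simp)
  have hbk : b ≤ k := hbc.trans hck
  have hk1 : w k * (F a - F (k + 1)) ≤ w (k + 1) * (F a - F (k + 1)) :=
    mul_le_mul_of_nonneg_right (hw k hbk hka) (sub_nonneg.2 <| by
      rcases (Nat.succ_le_of_lt hka).lt_or_eq with h | h
      · exact hF _ (by omega) h
      · exact (congrArg F h).le)
  calc w k * (F a - F k)
      _ = w k * (F a - F (k + 1)) + w k * (F (k + 1) - F k) := by
        rw [← mul_add, sub_add_sub_cancel]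
      _ ≤ (G a - G (k + 1)) + (G (k + 1) - G k) := by
        rw [hG k hbk hka]; gcongr; exact hk1.trans ih
      _ = G a - G k := sub_add_sub_cancel _ _ _

lemma le_of_weighted_increments (hba : b ≤ a) (hwb : 0 ≤ w b)
    (hw : ∀ c, b ≤ c → c < a → w c ≤ w (c + 1))
    (hG : ∀ c, b ≤ c → c < a → G (c + 1) - G c = w c * (F (c + 1) - F c))
    (hF : ∀ c, b ≤ c → c < a → F c ≤ F a) : G b ≤ G a := by
  have h := mul_sub_le_sub_of_weighted_increments hw hG hF le_rfl hba
  have hFb : 0 ≤ F a - F b := by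
    rcases hba.lt_or_eq with h | h
    · exact sub_nonneg.2 (hF b le_rfl h)
    · rw [h, sub_self]
  exact sub_nonneg.1 ((mul_nonneg hwb hFb).trans h)

end WeightedIncrements

lemma ncard_Sset_le_of_sVal_le {np : ℕ →₀ ℕ} {i b a : ℕ} (hi : 1 ≤ i) (hib : 2 * i ≤ b + 1)
    (hba : b ≤ a) (hmax : ∀ c, b ≤ c → c < a → sVal np c ≤ sVal np a) :
    (Sset np i b).ncard ≤ (Sset np i a).ncard := by
  set k : ℚ := 2 * i - 2 with hk
  have hk0 : 0 ≤ k := by rw [hk, sub_nonneg]; exact_mod_cast (by omega : 2 ≤ 2 * i)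
  have hkb : k < b := by rw [hk, sub_lt_iff_lt_add]; exact_mod_cast (by omega : 2 * i < b + 2)
  have hb0 : (0 : ℚ) < b := hk0.trans_lt hkb
  have hG : ∀ c, b ≤ c → ((Sset np i c).ncard : ℚ) = sVal np c - k * (np c + np (c + 1)) := by
    intro c hc
    rw [← ncard_Sset_add hi (hib.trans (by omega))]
    push_cast [Nat.cast_sub (by omega : 2 ≤ 2 * i)]
    ring
  have hw0 : 0 ≤ 1 - k / b := sub_nonneg.2 ((div_le_one hb0).2 hkb.le)
  have hw_mono : ∀ c, b ≤ c → c < a → 1 - k / c ≤ 1 - k / (c + 1 : ℕ) := fun c hbc _ =>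
    sub_le_sub_left (div_le_div_of_nonneg_left hk0 (hb0.trans_le (by exact_mod_cast hbc))
      (by simp)) 1
  have hinc : ∀ c, b ≤ c → c < a →
      ((Sset np i (c + 1)).ncard : ℚ) - (Sset np i c).ncard =
        (1 - k / c) * ((sVal np (c + 1) : ℚ) - sVal np c) := by
    intro c hbc _
    have hc0 : (c : ℚ) ≠ 0 := (hb0.trans_le (by exact_mod_cast hbc)).ne'
    have hs : (sVal np (c + 1) : ℚ) + c * np c = sVal np c + c * np (c + 2) := by
      exact_mod_cast sVal_succ_add c
    have hw : (1 - k / c) * ((sVal np (c + 1) : ℚ) - sVal np c) =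
        (c - k) * (np (c + 2) - np c) := by
      rw [show (sVal np (c + 1) : ℚ) - sVal np c = c * (np (c + 2) - np c) by
        linear_combination hs]
      field_simp
    rw [hG c hbc, hG (c + 1) (by omega), hw]
    linear_combination hs
  exact_mod_cast le_of_weighted_increments (F := fun c => (sVal np c : ℚ))
    (G := fun c => ((Sset np i c).ncard : ℚ)) (w := fun c => 1 - k / c) hba hw0 hw_mono hinc
    fun c hbc hca => by exact_mod_cast hmax c hbc hca

lemma Sset_disjoint_of_lt (np : ℕ →₀ ℕ) {i j c d : ℕ} (hij : i < j) (hcd : c + 2 ≤ d)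
    (hjd : 2 * j ≤ d + 1) : Disjoint (Sset np i c) (Sset np j d) := by
  rw [Set.disjoint_left]
  rintro ⟨w, p, k⟩ h1 h2
  simp only [Sset, vertexSet, Set.mem_ofPred_eq] at h1 h2
  omega

namespace ValidSeq

variable {b : ℕ → ℕ} {r : ℕ}

lemma add_two_mul_sub_le (hb : ValidSeq b r) {i j : ℕ} (hi : 1 ≤ i) (hij : i ≤ j)
    (hjr : j ≤ r) : b i + 2 * (j - i) ≤ b j := by
  induction j, hij using Nat.le_induction with
  | base => simp
  | succ j hij ih =>
    have := hb.2 j (hi.trans hij) (by omega)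
    have := ih (by omega)
    omega

lemma two_mul_le (hb : ValidSeq b r) {j : ℕ} (hj : 1 ≤ j) (hjr : j ≤ r) : 2 * j ≤ b j + 1 := by
  have := hb.add_two_mul_sub_le le_rfl hj hjr
  have := hb.1 1 le_rfl (by omega)
  omega

lemma disjoint_Sset (hb : ValidSeq b r) (np : ℕ →₀ ℕ) {i j : ℕ} (hi : i ∈ Set.Icc 1 r)
    (hj : j ∈ Set.Icc 1 r) (hij : i ≠ j) : Disjoint (Sset np i (b i)) (Sset np j (b j)) := by
  wlog hlt : i < j generalizing i j
  · exact (this hj hi hij.symm (by omega)).symm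
  have := hb.add_two_mul_sub_le hi.1 hlt.le hj.2
  exact Sset_disjoint_of_lt np hlt (by omega) (hb.two_mul_le hj.1 hj.2)

lemma ncard_UChain (hb : ValidSeq b r) (np : ℕ →₀ ℕ) {u : ℕ} (hu : u ∈ Set.Icc 1 r) :
    (UChain np b r).ncard =
      (Sset np u (b u)).ncard + (⋃ i ∈ Set.Icc 1 r \ {u}, Sset np i (b i)).ncard := by
  conv_lhs => rw [UChain, ← Set.insert_sdiff_self_of_mem hu, Set.biUnion_insert]
  refine Set.ncard_union_eq ?_ (finite_Sset np _ _)
    (((Set.finite_Icc 1 r).sdiff).biUnion fun i _ => finite_Sset np _ _)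
  exact Set.disjoint_iUnion₂_right.2 fun i hi =>
    hb.disjoint_Sset np hu hi.1 fun h => hi.2 h.symm

lemma update (hb : ValidSeq b r) {u a : ℕ} (hua : b u ≤ a) (hau : u < r → a + 2 ≤ b (u + 1)) :
    ValidSeq (fun j => if j = u then a else b j) r := by
  refine ⟨fun i hi hir => ?_, fun i hi hir => ?_⟩
  · have := hb.1 i hi hir
    dsimp only
    split_ifs with h
    · subst h; omega
    · exact this
  · have := hb.2 i hi hir
    dsimp only
    split_ifs with h h' h'
    · omega
    · subst h; exact hau hir
    · subst h'; omega
    · exact this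

end ValidSeq

theorem replacement_case_two_three_general
    (np : ℕ →₀ ℕ)
    (r : ℕ) (b : ℕ → ℕ) (hb : ValidSeq b r)
    (u : ℕ) (hu1 : 1 ≤ u) (hur : u ≤ r)
    (a : ℕ) (ha : b u + 1 < a) (hnext : u < r → a + 1 < b (u + 1))
    (hmax : ∀ c, b u ≤ c → c < a → sVal np c ≤ sVal np a) :
    ValidSeq (fun j => if j = u then a else b j) r ∧
    (UChain np b r).ncard ≤
      (UChain np (fun j => if j = u then a else b j) r).ncard := by
  have hu : u ∈ Set.Icc 1 r := ⟨hu1, hur⟩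
  have hb' := hb.update (u := u) (a := a) (by omega) fun h => (hnext h).nat_succ_le
  refine ⟨hb', ?_⟩
  have hrest : (⋃ i ∈ Set.Icc 1 r \ {u}, Sset np i (if i = u then a else b i)) =
      ⋃ i ∈ Set.Icc 1 r \ {u}, Sset np i (b i) :=
    Set.iUnion₂_congr fun i hi => by rw [if_neg (show i ≠ u from hi.2)]
  rw [hb.ncard_UChain np hu, hb'.ncard_UChain np hu, if_pos rfl, hrest]
  exact Nat.add_le_add_right
    (ncard_Sset_le_of_sVal_le hu1 (hb.two_mul_le hu1 hur) (by omega) hmax) _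

/-- Case 2.3 of Proposition 1.13: if `b_u + 1 < a` (and `a < b_{u+1} − 1`
when `u < r`) and `s(P,a) ≥ s(P,c)` for all `b_u ≤ c ≤ a − 1`, then
`b_1, …, b_{u−1}, a, b_{u+1}, …, b_r` defines an `r`-`U`-chain whose cardinality is at
least `|U_{b_1,…,b_r}|`. -/
theorem replacement_case_two_three
    (n : ℕ) (hn : 0 < n) (np : ℕ →₀ ℕ) (hP : IsPartitionOf n np)
    (r : ℕ) (b : ℕ → ℕ) (hb : ValidSeq b r)
    (u : ℕ) (hu1 : 1 ≤ u) (hur : u ≤ r)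
    (a : ℕ) (ha : b u + 1 < a) (hnext : u < r → a + 1 < b (u + 1))
    (hmax : ∀ c, b u ≤ c → c < a → sVal np c ≤ sVal np a) :
    ValidSeq (fun j => if j = u then a else b j) r ∧
    (UChain np b r).ncard ≤
      (UChain np (fun j => if j = u then a else b j) r).ncard :=
  replacement_case_two_three_general np r b hb u hu1 hur a ha hnext hmax
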